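/- arXiv:2204.11526 — 3 statements merged into one kernel-verified Lean document; each statement's English description precedes it below -/
import Mathlib

section
/- Let M ∈ ℝ_{≥0}^{R1×R2}, ε > 0, and fix μ ∈ P_{R1} with strictly positive entries. Let ν ∈ P_{R2} have strictly positive entries and let (α*, β*) be any maximizer of the dual objective αᵀμ + βᵀν − ε Σ_{m,n} exp((α_m + β_n − M_{mn})/ε). Then β* is a subgradient of the convex function ν' ↦ S_ε(μ,ν') at ν: for every ν' ∈ P_{R2}, S_ε(μ,ν') ≥ S_ε(μ,ν) + ⟨β*, ν' − ν⟩. -/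
/-!
Weak duality holds termwise by the Fenchel–Young inequality `c x - ε x (log x - 1) ≤ ε e^{c/ε}`.
At a dual maximizer `(α*, β*)` the first-order conditions say that the Gibbs plan
`e^{(α*_m + β*_n - M_{mn})/ε}` has marginals `μ` and `ν`; Fenchel–Young is an equality on it, so
`S_ε(μ, ν)` is the maximal dual value. The dual objective is affine in `ν` with slope `β*`, hence
`S_ε(μ, ν') ≥ dual(α*, β*; ν') = S_ε(μ, ν) + ⟨β*, ν' - ν⟩`.
-/

noncomputable section

open Finset

/-- The probability simplex in `ℝ^R`. -/
def probSimplex (R : ℕ) : Set (Fin R → ℝ) :=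
  {p | (∀ r, 0 ≤ p r) ∧ ∑ r, p r = 1}

/-- The transport polytope `Π(μ, ν)`. -/
def transportPolytope {R1 R2 : ℕ} (μ : Fin R1 → ℝ) (ν : Fin R2 → ℝ) :
    Set (Matrix (Fin R1) (Fin R2) ℝ) :=
  {T | (∀ m n, 0 ≤ T m n) ∧ (∀ m, ∑ n, T m n = μ m) ∧ (∀ n, ∑ m, T m n = ν n)}

/-- The entropy `H(T) = -∑ T_{mn} (log T_{mn} - 1)` (with `0 log 0 = 0`). -/
def entropyH {R1 R2 : ℕ} (T : Matrix (Fin R1) (Fin R2) ℝ) : ℝ :=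
  -∑ m, ∑ n, T m n * (Real.log (T m n) - 1)

/-- The entropy-regularized transport objective `⟨T, M⟩ - ε H(T)`. -/
def otObj {R1 R2 : ℕ} (M : Matrix (Fin R1) (Fin R2) ℝ) (ε : ℝ)
    (T : Matrix (Fin R1) (Fin R2) ℝ) : ℝ :=
  (∑ m, ∑ n, T m n * M m n) - ε * entropyH T

/-- The Sinkhorn distance `S_ε(μ, ν) = min_{T ∈ Π(μ,ν)} ⟨T, M⟩ - ε H(T)`. -/
def sinkhornDist {R1 R2 : ℕ} (M : Matrix (Fin R1) (Fin R2) ℝ) (ε : ℝ)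
    (μ : Fin R1 → ℝ) (ν : Fin R2 → ℝ) : ℝ :=
  sInf {c | ∃ T ∈ transportPolytope μ ν, c = otObj M ε T}

/-- The dual objective `αᵀμ + βᵀν - ε ∑_{m,n} exp((α_m + β_n - M_{mn})/ε)`. -/
def dualObj {R1 R2 : ℕ} (M : Matrix (Fin R1) (Fin R2) ℝ) (ε : ℝ)
    (μ : Fin R1 → ℝ) (ν : Fin R2 → ℝ) (α : Fin R1 → ℝ) (β : Fin R2 → ℝ) : ℝ :=
  (∑ m, α m * μ m) + (∑ n, β n * ν n)
    - ε * ∑ m, ∑ n, Real.exp ((α m + β n - M m n) / ε)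

theorem mul_sub_mul_log_le_exp {ε c x : ℝ} (hε : 0 < ε) (hx : 0 ≤ x) :
    c * x - ε * (x * (Real.log x - 1)) ≤ ε * Real.exp (c / ε) := by
  rcases hx.eq_or_lt with rfl | hx
  · simp only [zero_mul, mul_zero, sub_zero]
    positivity
  · have key : x * (c / ε - Real.log x + 1) ≤ Real.exp (c / ε) := by
      calc x * (c / ε - Real.log x + 1) ≤ x * Real.exp (c / ε - Real.log x) :=
            mul_le_mul_of_nonneg_left (Real.add_one_le_exp _) hx.le
        _ = Real.exp (c / ε) := by rw [Real.exp_sub, Real.exp_log hx]; field_simp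
    calc c * x - ε * (x * (Real.log x - 1)) = ε * (x * (c / ε - Real.log x + 1)) := by
          field_simp; ring
      _ ≤ ε * Real.exp (c / ε) := mul_le_mul_of_nonneg_left key hε.le

theorem eq_of_forall_mul_le_exp_sub_one {ε a K : ℝ} (hε : ε ≠ 0)
    (h : ∀ t, t * a ≤ ε * (Real.exp (t / ε) - 1) * K) : a = K := by
  have hmin : IsLocalMin (fun t => ε * (Real.exp (t / ε) - 1) * K - t * a) 0 :=
    Filter.Eventually.of_forall fun t => by simpa using h t
  have hderiv : HasDerivAt (fun t => ε * (Real.exp (t / ε) - 1) * K - t * a) (K - a) 0 :=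
    (((((hasDerivAt_id' (0 : ℝ)).div_const ε).exp.sub_const 1).const_mul ε).mul_const K
      |>.sub ((hasDerivAt_id' (0 : ℝ)).mul_const a)).congr_deriv (by field_simp; simp)
  linarith [hmin.hasDerivAt_eq_zero hderiv]

open scoped Matrix

section Duality

variable {R1 R2 : ℕ} (M : Matrix (Fin R1) (Fin R2) ℝ) (ε : ℝ)

def gibbsPlan (α : Fin R1 → ℝ) (β : Fin R2 → ℝ) : Matrix (Fin R1) (Fin R2) ℝ :=
  fun m n => Real.exp ((α m + β n - M m n) / ε)

theorem gibbsPlan_transpose (α : Fin R1 → ℝ) (β : Fin R2 → ℝ) :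
    gibbsPlan Mᵀ ε β α = (gibbsPlan M ε α β)ᵀ := by
  ext n m
  simp only [gibbsPlan, Matrix.transpose_apply, add_comm (β n)]

theorem dualObj_transpose (μ : Fin R1 → ℝ) (ν : Fin R2 → ℝ) (α : Fin R1 → ℝ) (β : Fin R2 → ℝ) :
    dualObj Mᵀ ε ν μ β α = dualObj M ε μ ν α β := by
  simp only [dualObj, Matrix.transpose_apply, add_comm (β _), Finset.sum_comm (γ := Fin R2)]
  ring

theorem otObj_eq_sum (T : Matrix (Fin R1) (Fin R2) ℝ) :
    otObj M ε T = ∑ m, ∑ n, (T m n * M m n + ε * (T m n * (Real.log (T m n) - 1))) := by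
  simp only [otObj, entropyH, mul_neg, sub_neg_eq_add, Finset.mul_sum, Finset.sum_add_distrib]

theorem dualObj_eq_sum_of_mem {μ : Fin R1 → ℝ} {ν : Fin R2 → ℝ} {T : Matrix (Fin R1) (Fin R2) ℝ}
    (hT : T ∈ transportPolytope μ ν) (α : Fin R1 → ℝ) (β : Fin R2 → ℝ) :
    dualObj M ε μ ν α β = ∑ m, ∑ n, ((α m + β n) * T m n - ε * gibbsPlan M ε α β m n) := by
  obtain ⟨-, hrow, hcol⟩ := hT
  simp only [dualObj, gibbsPlan, add_mul, Finset.sum_sub_distrib, Finset.sum_add_distrib,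
    Finset.mul_sum, ← hrow, ← hcol]
  rw [Finset.sum_comm (f := fun m n => β n * T m n)]

theorem dualObj_le_otObj (hε : 0 < ε) {μ : Fin R1 → ℝ} {ν : Fin R2 → ℝ}
    {T : Matrix (Fin R1) (Fin R2) ℝ} (hT : T ∈ transportPolytope μ ν)
    (α : Fin R1 → ℝ) (β : Fin R2 → ℝ) : dualObj M ε μ ν α β ≤ otObj M ε T := by
  rw [dualObj_eq_sum_of_mem M ε hT, otObj_eq_sum]
  gcongr with m _ n _
  have := mul_sub_mul_log_le_exp (c := α m + β n - M m n) hε (hT.1 m n)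
  simp only [gibbsPlan]
  linarith

theorem otObj_gibbsPlan (hε : ε ≠ 0) {μ : Fin R1 → ℝ} {ν : Fin R2 → ℝ} {α : Fin R1 → ℝ}
    {β : Fin R2 → ℝ} (h : gibbsPlan M ε α β ∈ transportPolytope μ ν) :
    otObj M ε (gibbsPlan M ε α β) = dualObj M ε μ ν α β := by
  rw [dualObj_eq_sum_of_mem M ε h, otObj_eq_sum]
  refine Finset.sum_congr rfl fun m _ => Finset.sum_congr rfl fun n _ => ?_
  simp only [gibbsPlan, Real.log_exp]
  field_simp
  ring

theorem dualObj_add_single (μ : Fin R1 → ℝ) (ν : Fin R2 → ℝ) (α : Fin R1 → ℝ) (β : Fin R2 → ℝ)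
    (m : Fin R1) (t : ℝ) :
    dualObj M ε μ ν (α + Pi.single m t) β = dualObj M ε μ ν α β
      + (t * μ m - ε * (Real.exp (t / ε) - 1) * ∑ n, gibbsPlan M ε α β m n) := by
  have hexp : ∀ m' n, Real.exp ((α m' + (Pi.single m t : Fin R1 → ℝ) m' + β n - M m' n) / ε)
      = gibbsPlan M ε α β m' n + (Pi.single m (Real.exp (t / ε) - 1) : Fin R1 → ℝ) m' * gibbsPlan M ε α β m' n := by
    intro m' n
    rcases eq_or_ne m' m with rfl | hm
    · rw [Pi.single_eq_same, Pi.single_eq_same, gibbsPlan,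
        show (α m' + t + β n - M m' n) / ε = t / ε + (α m' + β n - M m' n) / ε by ring, Real.exp_add]
      ring
    · simp [Pi.single_eq_of_ne hm, gibbsPlan]
  have hα : ∑ m', (Pi.single m t : Fin R1 → ℝ) m' * μ m' = t * μ m := by
    simp [Pi.single_apply]
  have hG : ∑ m', ∑ n, (Pi.single m (Real.exp (t / ε) - 1) : Fin R1 → ℝ) m' * gibbsPlan M ε α β m' n
      = (Real.exp (t / ε) - 1) * ∑ n, gibbsPlan M ε α β m n := by
    simp [Pi.single_apply, ← Finset.mul_sum]
  simp only [dualObj, Pi.add_apply, add_mul, Finset.sum_add_distrib, hexp, hα, hG]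
  simp only [gibbsPlan]
  ring

theorem sum_gibbsPlan_row_eq_of_forall_le (hε : ε ≠ 0) {μ : Fin R1 → ℝ} {ν : Fin R2 → ℝ}
    {α : Fin R1 → ℝ} {β : Fin R2 → ℝ}
    (hmax : ∀ α', dualObj M ε μ ν α' β ≤ dualObj M ε μ ν α β) (m : Fin R1) :
    ∑ n, gibbsPlan M ε α β m n = μ m := by
  refine (eq_of_forall_mul_le_exp_sub_one hε fun t => ?_).symm
  have := hmax (α + Pi.single m t)
  rw [dualObj_add_single] at this
  linarith

theorem sum_gibbsPlan_col_eq_of_forall_le (hε : ε ≠ 0) {μ : Fin R1 → ℝ} {ν : Fin R2 → ℝ}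
    {α : Fin R1 → ℝ} {β : Fin R2 → ℝ}
    (hmax : ∀ β', dualObj M ε μ ν α β' ≤ dualObj M ε μ ν α β) (n : Fin R2) :
    ∑ m, gibbsPlan M ε α β m n = ν n := by
  simpa [gibbsPlan_transpose, dualObj_transpose] using
    sum_gibbsPlan_row_eq_of_forall_le Mᵀ ε hε (μ := ν) (ν := μ) (α := β) (β := α)
      (by simpa only [dualObj_transpose] using hmax) n

theorem gibbsPlan_mem_transportPolytope_of_isMax (hε : ε ≠ 0) {μ : Fin R1 → ℝ} {ν : Fin R2 → ℝ}
    {α : Fin R1 → ℝ} {β : Fin R2 → ℝ}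
    (hmax : ∀ α' β', dualObj M ε μ ν α' β' ≤ dualObj M ε μ ν α β) :
    gibbsPlan M ε α β ∈ transportPolytope μ ν :=
  ⟨fun _ _ => (Real.exp_pos _).le,
    sum_gibbsPlan_row_eq_of_forall_le M ε hε fun α' => hmax α' β,
    sum_gibbsPlan_col_eq_of_forall_le M ε hε fun β' => hmax α β'⟩

theorem dualObj_le_sinkhornDist (hε : 0 < ε) {μ : Fin R1 → ℝ} {ν : Fin R2 → ℝ}
    (hne : (transportPolytope μ ν).Nonempty) (α : Fin R1 → ℝ) (β : Fin R2 → ℝ) :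
    dualObj M ε μ ν α β ≤ sinkhornDist M ε μ ν := by
  obtain ⟨T, hT⟩ := hne
  refine le_csInf ⟨_, T, hT, rfl⟩ ?_
  rintro _ ⟨T', hT', rfl⟩
  exact dualObj_le_otObj M ε hε hT' α β

theorem sinkhornDist_le_otObj (hε : 0 < ε) {μ : Fin R1 → ℝ} {ν : Fin R2 → ℝ}
    {T : Matrix (Fin R1) (Fin R2) ℝ} (hT : T ∈ transportPolytope μ ν) :
    sinkhornDist M ε μ ν ≤ otObj M ε T := by
  refine csInf_le ⟨dualObj M ε μ ν 0 0, ?_⟩ ⟨T, hT, rfl⟩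
  rintro _ ⟨T', hT', rfl⟩
  exact dualObj_le_otObj M ε hε hT' 0 0

theorem sinkhornDist_eq_dualObj_of_isMax (hε : 0 < ε) {μ : Fin R1 → ℝ} {ν : Fin R2 → ℝ}
    {α : Fin R1 → ℝ} {β : Fin R2 → ℝ}
    (hmax : ∀ α' β', dualObj M ε μ ν α' β' ≤ dualObj M ε μ ν α β) :
    sinkhornDist M ε μ ν = dualObj M ε μ ν α β := by
  have hG := gibbsPlan_mem_transportPolytope_of_isMax M ε hε.ne' hmax
  refine le_antisymm ?_ (dualObj_le_sinkhornDist M ε hε ⟨_, hG⟩ α β)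
  exact (sinkhornDist_le_otObj M ε hε hG).trans_eq (otObj_gibbsPlan M ε hε.ne' hG)

theorem dualObj_eq_add_sum_sub (μ : Fin R1 → ℝ) (ν ν' : Fin R2 → ℝ) (α : Fin R1 → ℝ)
    (β : Fin R2 → ℝ) :
    dualObj M ε μ ν' α β = dualObj M ε μ ν α β + ∑ n, β n * (ν' n - ν n) := by
  simp only [dualObj, mul_sub, Finset.sum_sub_distrib]
  ring

end Duality

theorem vecMulVec_mem_transportPolytope {R1 R2 : ℕ} {μ : Fin R1 → ℝ} {ν : Fin R2 → ℝ}
    (hμ : μ ∈ probSimplex R1) (hν : ν ∈ probSimplex R2) :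
    Matrix.vecMulVec μ ν ∈ transportPolytope μ ν := by
  refine ⟨fun m n => mul_nonneg (hμ.1 m) (hν.1 n), fun m => ?_, fun n => ?_⟩
  · simp [Matrix.vecMulVec_apply, ← Finset.mul_sum, hν.2]
  · simp [Matrix.vecMulVec_apply, ← Finset.sum_mul, hμ.2]

theorem dual_optimal_is_subgradient_general {R1 R2 : ℕ}
    (M : Matrix (Fin R1) (Fin R2) ℝ)
    (ε : ℝ) (hε : 0 < ε)
    (μ : Fin R1 → ℝ) (hμ : μ ∈ probSimplex R1)
    (ν : Fin R2 → ℝ)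
    (αs : Fin R1 → ℝ) (βs : Fin R2 → ℝ)
    (hmax : ∀ (α : Fin R1 → ℝ) (β : Fin R2 → ℝ),
      dualObj M ε μ ν α β ≤ dualObj M ε μ ν αs βs) :
    ∀ ν' ∈ probSimplex R2,
      sinkhornDist M ε μ ν + ∑ n, βs n * (ν' n - ν n) ≤ sinkhornDist M ε μ ν' := by
  intro ν' hν'
  rw [sinkhornDist_eq_dualObj_of_isMax M ε hε hmax, ← dualObj_eq_add_sum_sub]
  exact dualObj_le_sinkhornDist M ε hε ⟨_, vecMulVec_mem_transportPolytope hμ hν'⟩ αs βs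

/-- If `(α*, β*)` maximizes the dual objective at `ν`, then `β*` is a subgradient
of `ν' ↦ S_ε(μ, ν')` at `ν`: for every `ν'` in the simplex,
`S_ε(μ, ν') ≥ S_ε(μ, ν) + ⟨β*, ν' - ν⟩`. -/
theorem dual_optimal_is_subgradient {R1 R2 : ℕ}
    (M : Matrix (Fin R1) (Fin R2) ℝ) (hM : ∀ m n, 0 ≤ M m n)
    (ε : ℝ) (hε : 0 < ε)
    (μ : Fin R1 → ℝ) (hμ : μ ∈ probSimplex R1) (hμpos : ∀ m, 0 < μ m)
    (ν : Fin R2 → ℝ) (hν : ν ∈ probSimplex R2) (hνpos : ∀ n, 0 < ν n)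
    (αs : Fin R1 → ℝ) (βs : Fin R2 → ℝ)
    (hmax : ∀ (α : Fin R1 → ℝ) (β : Fin R2 → ℝ),
      dualObj M ε μ ν α β ≤ dualObj M ε μ ν αs βs) :
    ∀ ν' ∈ probSimplex R2,
      sinkhornDist M ε μ ν + ∑ n, βs n * (ν' n - ν n) ≤ sinkhornDist M ε μ ν' :=
  dual_optimal_is_subgradient_general M ε hε μ hμ ν αs βs hmax
end
end

section
/- Let K ∈ ℝ_{>0}^{R1×R2} be entrywise positive, let μ ∈ ℝ_{>0}^{R1} and ν ∈ ℝ_{>0}^{R2} be entrywise positive, and let (u*, v*) be positive vectors satisfying u* = μ ./ (K v*) and v* = ν ./ (Kᵀ u*). For any entrywise positive v, define u⁺ = μ ./ (K v). Then d_HP(u⁺, u*) ≤ κ(K) · d_HP(v, v*), where d_HP is the Hilbert projective metric and κ(K) the Birkhoff contraction constant of K. -/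
noncomputable section

/-- The Hilbert projective metric `d_HP(x,y) = log max_{i,j} (x_i y_j)/(x_j y_i)`
on entrywise positive vectors. -/
def dHP {R : ℕ} (x y : Fin R → ℝ) : ℝ :=
  Real.log (⨆ i, ⨆ j, x i * y j / (x j * y i))

/-- `ψ(K) = max_{i,j,k,l} (K_{ik} K_{jl})/(K_{jk} K_{il})` for a positive matrix `K`. -/
def psiK {R1 R2 : ℕ} (K : Matrix (Fin R1) (Fin R2) ℝ) : ℝ :=
  ⨆ i, ⨆ j, ⨆ k, ⨆ l, K i k * K j l / (K j k * K i l)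

/-- The Birkhoff contraction constant `κ(K) = (√ψ(K) - 1)/(√ψ(K) + 1)`. -/
def kappaK {R1 R2 : ℕ} (K : Matrix (Fin R1) (Fin R2) ℝ) : ℝ :=
  (Real.sqrt (psiK K) - 1) / (Real.sqrt (psiK K) + 1)

/-!
Since `u⁺ᵢ / u*ᵢ = (K v*)ᵢ / (K v)ᵢ`, the factor `μ` cancels and the claim is Birkhoff's
contraction `d_HP(K v*, K v) ≤ κ(K) d_HP(v*, v)`. For rows `i, j`, the ratio
`(K v*)ᵢ (K v)ⱼ / ((K v)ᵢ (K v*)ⱼ)` is a quotient of two weighted means of `t = v* ./ v`,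
with weights `p_k = K_ik v_k` and `q_k = K_jk v_k` satisfying `p_k q_l ≤ ψ p_l q_k`. Writing
`t = m (1 + (r - 1) s)` with `s ∈ [0, 1]` and `r = max t / min t`, the quotient becomes
`(1 + (r - 1) α) / (1 + (r - 1) β)` for means `α, β ∈ [0, 1]` of `s` with
`α (1 - β) ≤ ψ β (1 - α)`, and a one-variable monotonicity argument in `r` bounds its
logarithm by `κ log r`.
-/

theorem cross_ratio_poly_le {a r α β : ℝ} (ha : 1 ≤ a) (hr : 0 ≤ r)
    (hα₀ : 0 ≤ α) (hα₁ : α ≤ 1) (hβ₀ : 0 ≤ β) (hβ₁ : β ≤ 1)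
    (h : α * (1 - β) ≤ a ^ 2 * (β * (1 - α))) :
    (a + 1) * r * (α - β) ≤ (a - 1) * ((1 + (r - 1) * α) * (1 + (r - 1) * β)) := by
  obtain ⟨x, hx₀, hx⟩ : ∃ x, 0 ≤ x ∧ x ^ 2 = α * (1 - β) :=
    ⟨_, Real.sqrt_nonneg _, Real.sq_sqrt (by nlinarith)⟩
  obtain ⟨y, hy₀, hy⟩ : ∃ y, 0 ≤ y ∧ y ^ 2 = β * (1 - α) :=
    ⟨_, Real.sqrt_nonneg _, Real.sq_sqrt (by nlinarith)⟩
  have hxy : x ≤ a * y :=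
    (pow_le_pow_iff_left₀ hx₀ (by positivity) two_ne_zero).1 (by rw [mul_pow, hx, hy]; exact h)
  have amgm : 2 * r * (x * y) ≤ (1 - α) * (1 - β) + r ^ 2 * (α * β) := by
    have hA : 0 ≤ (1 - α) * (1 - β) := mul_nonneg (sub_nonneg.2 hα₁) (sub_nonneg.2 hβ₁)
    refine (pow_le_pow_iff_left₀ (by positivity) (by positivity) two_ne_zero).1 ?_
    have hsq : (2 * r * (x * y)) ^ 2 = 4 * ((1 - α) * (1 - β)) * (r ^ 2 * (α * β)) := by
      linear_combination 4 * r ^ 2 * (y ^ 2 * hx + α * (1 - β) * hy)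
    nlinarith [sq_nonneg ((1 - α) * (1 - β) - r ^ 2 * (α * β))]
  -- The `(a - 1)` part is AM-GM; the rest is nonnegative exactly because `x ≤ a y`.
  have key : (a - 1) * ((1 + (r - 1) * α) * (1 + (r - 1) * β)) - (a + 1) * r * (α - β) =
      (a - 1) * ((1 - α) * (1 - β) + r ^ 2 * (α * β) - 2 * r * (x * y)) +
        2 * r * (x + y) * (a * y - x) := by
    linear_combination 2 * r * hx - 2 * r * a * hy
  linarith [mul_nonneg (sub_nonneg.2 ha) (sub_nonneg.2 amgm),
    mul_nonneg (mul_nonneg hr (add_nonneg hx₀ hy₀)) (sub_nonneg.2 hxy)]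

theorem log_one_add_mul_sub_log_one_add_mul_le {a r α β : ℝ} (ha : 1 ≤ a) (hr : 1 ≤ r)
    (hα₀ : 0 ≤ α) (hα₁ : α ≤ 1) (hβ₀ : 0 ≤ β) (hβ₁ : β ≤ 1)
    (h : α * (1 - β) ≤ a ^ 2 * (β * (1 - α))) :
    Real.log (1 + (r - 1) * α) - Real.log (1 + (r - 1) * β) ≤
      (a - 1) / (a + 1) * Real.log r := by
  have hpos : ∀ {s γ : ℝ}, 1 ≤ s → 0 ≤ γ → 0 < 1 + (s - 1) * γ := fun hs hγ => by
    nlinarith [mul_nonneg (sub_nonneg.2 hs) hγ]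
  have hlog : ∀ {s γ : ℝ}, 1 ≤ s → 0 ≤ γ →
      HasDerivAt (fun s => Real.log (1 + (s - 1) * γ)) (γ / (1 + (s - 1) * γ)) s := by
    intro s γ hs hγ
    simpa using ((((hasDerivAt_id s).sub_const 1).mul_const γ).const_add 1).log (hpos hs hγ).ne'
  set g : ℝ → ℝ := fun s => (a - 1) / (a + 1) * Real.log s -
    (Real.log (1 + (s - 1) * α) - Real.log (1 + (s - 1) * β)) with hg
  have hg' : ∀ s, 1 ≤ s → HasDerivAt g ((a - 1) / (a + 1) * s⁻¹ -
      (α / (1 + (s - 1) * α) - β / (1 + (s - 1) * β))) s := fun s hs =>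
    ((Real.hasDerivAt_log (by positivity)).const_mul _).sub ((hlog hs hα₀).sub (hlog hs hβ₀))
  have hmono : MonotoneOn g (Set.Ici 1) := by
    refine monotoneOn_of_hasDerivWithinAt_nonneg (convex_Ici 1)
      (fun s hs => (hg' s hs).continuousAt.continuousWithinAt)
      (fun s hs => (hg' s (interior_subset hs)).hasDerivWithinAt) fun s hs => ?_
    rw [interior_Ici] at hs
    have hs₀ : 0 < s := zero_lt_one.trans hs
    have hA := hpos hs.le hα₀
    have hB := hpos hs.le hβ₀
    have := cross_ratio_poly_le ha hs₀.le hα₀ hα₁ hβ₀ hβ₁ h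
    rw [sub_nonneg, div_sub_div _ _ hA.ne' hB.ne', div_mul_eq_mul_div, ← div_eq_mul_inv, div_div,
      div_le_div_iff₀ (by positivity) (by positivity)]
    nlinarith
  simpa [hg] using hmono Set.self_mem_Ici hr hr

section WeightedMean

variable {ι : Type*} [Fintype ι]

theorem sum_mul_mul_sum_one_sub_le {ψ : ℝ} {p q s : ι → ℝ}
    (hpq : ∀ k l, p k * q l ≤ ψ * (p l * q k)) (hs₀ : ∀ k, 0 ≤ s k)
    (hs₁ : ∀ k, s k ≤ 1) :
    (∑ k, p k * s k) * ∑ k, q k * (1 - s k) ≤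
      ψ * ((∑ k, q k * s k) * ∑ k, p k * (1 - s k)) := by
  rw [Finset.sum_mul_sum, Finset.sum_mul_sum, Finset.mul_sum]
  refine Finset.sum_le_sum fun k _ => ?_
  rw [Finset.mul_sum]
  refine Finset.sum_le_sum fun l _ => ?_
  calc p k * s k * (q l * (1 - s l)) = p k * q l * (s k * (1 - s l)) := by ring
    _ ≤ ψ * (p l * q k) * (s k * (1 - s l)) :=
      mul_le_mul_of_nonneg_right (hpq k l) (mul_nonneg (hs₀ k) (sub_nonneg.2 (hs₁ l)))
    _ = ψ * (q k * s k * (p l * (1 - s l))) := by ring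

theorem log_weighted_mean_ratio_le [Nonempty ι] {a : ℝ} (ha : 1 ≤ a) {p q t : ι → ℝ}
    (hp : ∀ k, 0 < p k) (hq : ∀ k, 0 < q k) (hpq : ∀ k l, p k * q l ≤ a ^ 2 * (p l * q k))
    {m M : ℝ} (hm : 0 < m) (hmt : ∀ k, m ≤ t k) (htM : ∀ k, t k ≤ M) :
    Real.log ((∑ k, p k * t k) * (∑ k, q k) / ((∑ k, p k) * ∑ k, q k * t k)) ≤
      (a - 1) / (a + 1) * Real.log (M / m) := by
  have hmM : m ≤ M := (hmt (Classical.arbitrary ι)).trans (htM _)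
  set s : ι → ℝ := fun k => (t k - m) / (M - m)
  have hs₀ : ∀ k, 0 ≤ s k := fun k => div_nonneg (sub_nonneg.2 (hmt k)) (sub_nonneg.2 hmM)
  have hs₁ : ∀ k, s k ≤ 1 := fun k =>
    div_le_one_of_le₀ (sub_le_sub_right (htM k) m) (sub_nonneg.2 hmM)
  -- when `M = m` the junk value `s = 0` still satisfies this
  have ht : ∀ k, t k = m * (1 + (M / m - 1) * s k) := by
    intro k
    rcases eq_or_ne M m with hMm | hMm
    · simp [s, hMm, le_antisymm (hMm ▸ htM k) (hmt k)]
    · simp only [s]; field_simp [sub_ne_zero.2 hMm]; ring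
  have hmean : ∀ w : ι → ℝ, (∀ k, 0 < w k) →
      ∑ k, w k * t k =
        m * (∑ k, w k) * (1 + (M / m - 1) * ((∑ k, w k * s k) / ∑ k, w k)) ∧
      0 ≤ (∑ k, w k * s k) / ∑ k, w k ∧ (∑ k, w k * s k) / ∑ k, w k ≤ 1 := by
    intro w hw
    have hW : 0 < ∑ k, w k := Finset.sum_pos (fun k _ => hw k) Finset.univ_nonempty
    refine ⟨?_, div_nonneg (Finset.sum_nonneg fun k _ => mul_nonneg (hw k).le (hs₀ k)) hW.le,
      div_le_one_of_le₀
        (Finset.sum_le_sum fun k _ => mul_le_of_le_one_right (hw k).le (hs₁ k)) hW.le⟩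
    calc ∑ k, w k * t k = ∑ k, (m * w k + m * (M / m - 1) * (w k * s k)) :=
          Finset.sum_congr rfl fun k _ => by rw [ht k]; ring
      _ = m * (∑ k, w k) + m * (M / m - 1) * ∑ k, w k * s k := by
          rw [Finset.sum_add_distrib, ← Finset.mul_sum, ← Finset.mul_sum]
      _ = _ := by field_simp
  obtain ⟨hpt, hα₀, hα₁⟩ := hmean p hp
  obtain ⟨hqt, hβ₀, hβ₁⟩ := hmean q hq
  have hP : 0 < ∑ k, p k := Finset.sum_pos (fun k _ => hp k) Finset.univ_nonempty
  have hQ : 0 < ∑ k, q k := Finset.sum_pos (fun k _ => hq k) Finset.univ_nonempty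
  have hcross := sum_mul_mul_sum_one_sub_le hpq hs₀ hs₁
  simp only [mul_one_sub, Finset.sum_sub_distrib] at hcross
  have hC : (∑ k, p k * s k) / (∑ k, p k) * (1 - (∑ k, q k * s k) / ∑ k, q k) ≤
      a ^ 2 * ((∑ k, q k * s k) / (∑ k, q k) * (1 - (∑ k, p k * s k) / ∑ k, p k)) := by
    rw [one_sub_div hP.ne', one_sub_div hQ.ne', div_mul_div_comm, div_mul_div_comm,
      mul_comm (∑ k, q k), ← mul_div_assoc]
    gcongr
  have hcancel : ∀ x y : ℝ,
      m * (∑ k, p k) * x * (∑ k, q k) / ((∑ k, p k) * (m * (∑ k, q k) * y)) = x / y :=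
    fun x y => by field_simp
  have hr : 1 ≤ M / m := (one_le_div hm).2 hmM
  have hne : ∀ γ, 0 ≤ γ → 1 + (M / m - 1) * γ ≠ 0 := fun γ hγ =>
    (add_pos_of_pos_of_nonneg one_pos (mul_nonneg (sub_nonneg.2 hr) hγ)).ne'
  rw [hpt, hqt, hcancel, Real.log_div (hne _ hα₀) (hne _ hβ₀)]
  exact log_one_add_mul_sub_log_one_add_mul_le ha hr hα₀ hα₁ hβ₀ hβ₁ hC

end WeightedMean

section HilbertMetric

variable {R : ℕ} {x y : Fin R → ℝ}

theorem ratio_le_iSup_ratio (x y : Fin R → ℝ) (i j : Fin R) :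
    x i * y j / (x j * y i) ≤ ⨆ i, ⨆ j, x i * y j / (x j * y i) :=
  le_ciSup_of_le (Set.finite_range _).bddAbove i
    (le_ciSup (f := fun j => x i * y j / (x j * y i)) (Set.finite_range _).bddAbove j)

theorem ratio_pos (hx : ∀ i, 0 < x i) (hy : ∀ i, 0 < y i) (i j : Fin R) :
    0 < x i * y j / (x j * y i) :=
  div_pos (mul_pos (hx i) (hy j)) (mul_pos (hx j) (hy i))

theorem le_exp_dHP (hx : ∀ i, 0 < x i) (hy : ∀ i, 0 < y i) (i j : Fin R) :
    x i * y j / (x j * y i) ≤ Real.exp (dHP x y) := by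
  have hle := ratio_le_iSup_ratio x y i j
  rwa [dHP, Real.exp_log ((ratio_pos hx hy i j).trans_le hle)]

theorem dHP_le_of_forall_le_exp [Nonempty (Fin R)] (hx : ∀ i, 0 < x i) (hy : ∀ i, 0 < y i)
    {c : ℝ} (h : ∀ i j, x i * y j / (x j * y i) ≤ Real.exp c) : dHP x y ≤ c := by
  obtain ⟨i⟩ := ‹Nonempty (Fin R)›
  rw [dHP, Real.log_le_iff_le_exp ((ratio_pos hx hy i i).trans_le (ratio_le_iSup_ratio x y i i))]
  exact ciSup_le fun i => ciSup_le fun j => h i j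

theorem dHP_comm [Nonempty (Fin R)] (hx : ∀ i, 0 < x i) (hy : ∀ i, 0 < y i) :
    dHP x y = dHP y x := by
  have swap : ∀ {x y : Fin R → ℝ}, (∀ i, 0 < x i) → (∀ i, 0 < y i) →
      dHP y x ≤ dHP x y :=
    fun hx hy => dHP_le_of_forall_le_exp hy hx fun i j =>
      (le_exp_dHP hx hy j i).trans_eq' (by ring)
  exact le_antisymm (swap hy hx) (swap hx hy)

theorem dHP_div_div {c : Fin R → ℝ} (hc : ∀ i, c i ≠ 0) (hx : ∀ i, x i ≠ 0)
    (hy : ∀ i, y i ≠ 0) :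
    dHP (fun i => c i / x i) (fun i => c i / y i) = dHP y x := by
  unfold dHP
  congr 1
  refine iSup_congr fun i => iSup_congr fun j => ?_
  field_simp [hc i, hc j, hx i, hx j, hy i, hy j]

end HilbertMetric

open scoped Matrix

section Birkhoff

variable {R1 R2 : ℕ} {K : Matrix (Fin R1) (Fin R2) ℝ}

theorem le_psiK (K : Matrix (Fin R1) (Fin R2) ℝ) (i j : Fin R1) (k l : Fin R2) :
    K i k * K j l / (K j k * K i l) ≤ psiK K := by
  have bdd : ∀ {n : ℕ} (f : Fin n → ℝ), BddAbove (Set.range f) := fun f =>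
    (Set.finite_range f).bddAbove
  refine le_ciSup_of_le (bdd _) i (le_ciSup_of_le (bdd _) j (le_ciSup_of_le (bdd _) k ?_))
  exact le_ciSup (f := fun l => K i k * K j l / (K j k * K i l)) (bdd _) l

theorem one_le_psiK [Nonempty (Fin R1)] [Nonempty (Fin R2)] (hK : ∀ i k, 0 < K i k) :
    1 ≤ psiK K := by
  obtain ⟨i⟩ := ‹Nonempty (Fin R1)›
  obtain ⟨k⟩ := ‹Nonempty (Fin R2)›
  simpa [div_self (mul_pos (hK i k) (hK i k)).ne'] using le_psiK K i i k k

theorem mulVec_pos [Nonempty (Fin R2)] (hK : ∀ i k, 0 < K i k) {x : Fin R2 → ℝ}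
    (hx : ∀ k, 0 < x k) (i : Fin R1) : 0 < (K *ᵥ x) i :=
  Finset.sum_pos (fun k _ => mul_pos (hK i k) (hx k)) Finset.univ_nonempty

theorem dHP_mulVec_le [Nonempty (Fin R1)] [Nonempty (Fin R2)] (hK : ∀ i k, 0 < K i k)
    {x y : Fin R2 → ℝ} (hx : ∀ k, 0 < x k) (hy : ∀ k, 0 < y k) :
    dHP (K *ᵥ x) (K *ᵥ y) ≤ kappaK K * dHP x y := by
  obtain ⟨k₀, hk₀⟩ := Finite.exists_min fun k => x k / y k
  obtain ⟨k₁, hk₁⟩ := Finite.exists_max fun k => x k / y k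
  have hψ := one_le_psiK hK
  have ha : 1 ≤ Real.sqrt (psiK K) := Real.one_le_sqrt.2 hψ
  have hκ : 0 ≤ kappaK K := div_nonneg (by linarith) (by linarith)
  have hspread : Real.log ((x k₁ / y k₁) / (x k₀ / y k₀)) ≤ dHP x y := by
    rw [Real.log_le_iff_le_exp
      (div_pos (div_pos (hx k₁) (hy k₁)) (div_pos (hx k₀) (hy k₀)))]
    exact (le_exp_dHP hx hy k₁ k₀).trans_eq' (by field_simp)
  have hmulVec : ∀ i, ∑ k, K i k * y k * (x k / y k) = (K *ᵥ x) i := fun i =>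
    Finset.sum_congr rfl fun k _ => by field_simp [(hy k).ne']
  refine dHP_le_of_forall_le_exp (mulVec_pos hK hx) (mulVec_pos hK hy) fun i j => ?_
  have hcross : ∀ k l, K i k * y k * (K j l * y l) ≤
      Real.sqrt (psiK K) ^ 2 * (K i l * y l * (K j k * y k)) := by
    intro k l
    have := (div_le_iff₀ (mul_pos (hK j k) (hK i l))).1 (le_psiK K i j k l)
    rw [Real.sq_sqrt (zero_le_one.trans hψ)]
    nlinarith [mul_pos (hy k) (hy l)]
  have hmean := log_weighted_mean_ratio_le ha (fun k => mul_pos (hK i k) (hy k))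
    (fun k => mul_pos (hK j k) (hy k)) hcross (div_pos (hx k₀) (hy k₀)) hk₀ hk₁
  rw [hmulVec, hmulVec] at hmean
  rw [← Real.log_le_iff_le_exp (ratio_pos (mulVec_pos hK hx) (mulVec_pos hK hy) i j)]
  calc Real.log ((K *ᵥ x) i * (K *ᵥ y) j / ((K *ᵥ x) j * (K *ᵥ y) i))
      = Real.log ((K *ᵥ x) i * (K *ᵥ y) j / ((K *ᵥ y) i * (K *ᵥ x) j)) := by
        rw [mul_comm ((K *ᵥ x) j)]
    _ ≤ kappaK K * Real.log ((x k₁ / y k₁) / (x k₀ / y k₀)) := hmean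
    _ ≤ kappaK K * dHP x y := mul_le_mul_of_nonneg_left hspread hκ

end Birkhoff

theorem sinkhorn_half_step_contraction_general {R1 R2 : ℕ}
    [Nonempty (Fin R1)] [Nonempty (Fin R2)]
    (K : Matrix (Fin R1) (Fin R2) ℝ) (hK : ∀ i j, 0 < K i j)
    (μ : Fin R1 → ℝ)
    (hμpos : ∀ m, 0 < μ m)
    (ustar : Fin R1 → ℝ) (vstar : Fin R2 → ℝ)
    (hvstar_pos : ∀ n, 0 < vstar n)
    (hustar : ∀ m, ustar m = μ m / K.mulVec vstar m)
    (v : Fin R2 → ℝ) (hv : ∀ n, 0 < v n) :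
    dHP (fun m => μ m / K.mulVec v m) ustar ≤ kappaK K * dHP v vstar := by
  obtain rfl : ustar = fun m => μ m / K.mulVec vstar m := funext hustar
  rw [dHP_div_div (fun m => (hμpos m).ne') (fun m => (mulVec_pos hK hv m).ne')
    (fun m => (mulVec_pos hK hvstar_pos m).ne'), dHP_comm hv hvstar_pos]
  exact dHP_mulVec_le hK hvstar_pos hv

/-- One Sinkhorn half-step contracts the Hilbert projective metric: if `(u*, v*)` is
a Sinkhorn fixed point and `u⁺ = μ ./ (K v)`, then
`d_HP(u⁺, u*) ≤ κ(K) d_HP(v, v*)`. -/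
theorem sinkhorn_half_step_contraction {R1 R2 : ℕ}
    [Nonempty (Fin R1)] [Nonempty (Fin R2)]
    (K : Matrix (Fin R1) (Fin R2) ℝ) (hK : ∀ i j, 0 < K i j)
    (μ : Fin R1 → ℝ) (ν : Fin R2 → ℝ)
    (hμpos : ∀ m, 0 < μ m) (hνpos : ∀ n, 0 < ν n)
    (ustar : Fin R1 → ℝ) (vstar : Fin R2 → ℝ)
    (hustar_pos : ∀ m, 0 < ustar m) (hvstar_pos : ∀ n, 0 < vstar n)
    (hustar : ∀ m, ustar m = μ m / K.mulVec vstar m)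
    (hvstar : ∀ n, vstar n = ν n / K.transpose.mulVec ustar n)
    (v : Fin R2 → ℝ) (hv : ∀ n, 0 < v n) :
    dHP (fun m => μ m / K.mulVec v m) ustar ≤ kappaK K * dHP v vstar :=
  sinkhorn_half_step_contraction_general K hK μ hμpos ustar vstar hvstar_pos hustar v hv
end
end

section
/- (Convergence rate of the Sinkhorn gradient, Proposition 4.3) Let K ∈ ℝ_{>0}^{R1×R2} be entrywise positive, let μ, ν be entrywise positive probability vectors, and let v^{(0)}, v^{(1)}, v^{(2)}, … be the second scaling vectors produced by the Sinkhorn iterations u^{(t+1)} = μ ./ (K v^{(t)}), v^{(t+1)} = ν ./ (Kᵀ u^{(t+1)}), converging to a fixed point (u*, v*). Define the approximate gradient after t iterations as g^{(t)} = ε log v^{(t)} and the true gradient as g = ε log v* (logarithms elementwise), with ε > 0. Then for every t with ‖g^{(t)} − g‖_var > 0, ‖g^{(t+1)} − g‖_var / ‖g^{(t)} − g‖_var ≤ κ(K)², where ‖w‖_var = max_i w_i − min_i w_i and κ(K) = (√ψ(K) − 1)/(√ψ(K) + 1) with ψ(K) = max_{i,j,k,l} (K_{ik} K_{jl})/(K_{jk}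 K_{il}). -/
/-!
Each half-step of the Sinkhorn iteration has the form `w ↦ c ./ (A w)` with `A = K` or `A = Kᵀ`,
and `log (c ./ A w) - log (c ./ A w')` is `log (A w') - log (A w)`; the cross ratios of `Kᵀ`
are those of `K`. So it suffices that `w ↦ log (A w)` contracts the variation seminorm of
log-differences by the factor `κ` (Birkhoff). Move from `y` to `x` along `s ↦ y ⊙ exp (s a)`,
`a = log x - log y`: the derivative of `log (A _)ᵢ - log (A _)ⱼ` is the difference of the means
of `a` under two weight vectors `p, q` with `p k q l ≤ ψ q k p l`. If `S` is where `p > q`, that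
difference is at most `(p(S) - q(S)) ‖a‖_var`, and `p(S) (1 - q(S)) ≤ ψ q(S) (1 - p(S))` forces
`p(S) - q(S) ≤ (√ψ - 1)/(√ψ + 1)`.
-/

noncomputable section

open Finset

/-- The variation seminorm `‖w‖_var = max_i w_i - min_i w_i`. -/
def varSeminorm {R : ℕ} (w : Fin R → ℝ) : ℝ :=
  (⨆ i, w i) - ⨅ i, w i

open Real

lemma sub_le_of_odds_ratio_le {c s t : ℝ} (hc : 1 ≤ c) (ht : 0 ≤ t)
    (h : s * (1 - t) ≤ c ^ 2 * (t * (1 - s))) : s - t ≤ (c - 1) / (c + 1) := by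
  rw [le_div_iff₀ (by linarith)]
  have hpos : 0 < 1 + (c ^ 2 - 1) * t := by
    nlinarith [mul_nonneg (by nlinarith : (0:ℝ) ≤ c ^ 2 - 1) ht]
  -- Multiplied by `1 + (c² - 1) t > 0`, the claim becomes a sum of two nonnegative terms.
  have key : (1 + (c ^ 2 - 1) * t) * ((t - s) * (c + 1) + (c - 1))
      = (c - 1) * (1 - (c + 1) * t) ^ 2 + (c + 1) * (c ^ 2 * (t * (1 - s)) - s * (1 - t)) := by
    ring
  have : 0 ≤ (1 + (c ^ 2 - 1) * t) * ((t - s) * (c + 1) + (c - 1)) := by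
    rw [key]
    have := mul_nonneg (sub_nonneg.2 hc) (sq_nonneg (1 - (c + 1) * t))
    nlinarith
  nlinarith [(mul_nonneg_iff_of_pos_left hpos).mp this]

lemma sum_mul_sub_sum_mul_le {ι : Type*} [Fintype ι] {p q a : ι → ℝ} {m M : ℝ}
    (hpq : ∑ k, p k = ∑ k, q k) (hm : ∀ k, m ≤ a k) (hM : ∀ k, a k ≤ M) :
    ∑ k, p k * a k - ∑ k, q k * a k ≤
      (∑ k ∈ univ.filter (fun k => q k < p k), (p k - q k)) * (M - m) := by
  set S := univ.filter (fun k => q k < p k)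
  calc ∑ k, p k * a k - ∑ k, q k * a k = ∑ k, (p k - q k) * (a k - m) := by
        simp only [mul_sub, sub_mul, sum_sub_distrib, ← sum_mul, hpq]; ring
    _ ≤ ∑ k ∈ S, (p k - q k) * (a k - m) := by
        rw [← sum_filter_add_sum_filter_not univ (fun k => q k < p k)]
        refine add_le_of_nonpos_right (sum_nonpos fun k hk => ?_)
        exact mul_nonpos_of_nonpos_of_nonneg (by simpa using (mem_filter.1 hk).2)
          (by linarith [hm k])
    _ ≤ ∑ k ∈ S, (p k - q k) * (M - m) :=
        sum_le_sum fun k hk => mul_le_mul_of_nonneg_left (by linarith [hM k])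
          (by linarith [(mem_filter.1 hk).2])
    _ = _ := by rw [sum_mul]

lemma sum_mul_sub_sum_mul_le_of_cross_ratio_le {ι : Type*} [Fintype ι] {p q a : ι → ℝ}
    {ψ m M : ℝ} (hq : ∀ k, 0 ≤ q k) (hp_sum : ∑ k, p k = 1) (hq_sum : ∑ k, q k = 1)
    (hψ : ∀ k l, p k * q l ≤ ψ * (q k * p l)) (hm : ∀ k, m ≤ a k) (hM : ∀ k, a k ≤ M) :
    ∑ k, p k * a k - ∑ k, q k * a k ≤ (√ψ - 1) / (√ψ + 1) * (M - m) := by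
  have cross_sum : ∀ A B : Finset ι,
      (∑ k ∈ A, p k) * ∑ l ∈ B, q l ≤ ψ * ((∑ k ∈ A, q k) * ∑ l ∈ B, p l) := fun A B => by
    rw [sum_mul_sum, sum_mul_sum, mul_sum]
    refine sum_le_sum fun k _ => ?_
    rw [mul_sum]
    exact sum_le_sum fun l _ => hψ k l
  have hψ1 : 1 ≤ ψ := by simpa [hp_sum, hq_sum] using cross_sum univ univ
  set S := univ.filter (fun k => q k < p k)
  have hcompl : ∀ f : ι → ℝ, ∑ k, f k = 1 →
      ∑ k ∈ univ.filter (fun k => ¬ q k < p k), f k = 1 - ∑ k ∈ S, f k := fun f hf => by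
    rw [← hf, ← sum_filter_add_sum_filter_not univ (fun k => q k < p k) f, add_sub_cancel_left]
  have hodds : ∑ k ∈ S, p k - ∑ k ∈ S, q k ≤ (√ψ - 1) / (√ψ + 1) := by
    refine sub_le_of_odds_ratio_le (one_le_sqrt.2 hψ1) (sum_nonneg fun k _ => hq k) ?_
    rw [sq_sqrt (by linarith), ← hcompl p hp_sum, ← hcompl q hq_sum]
    exact cross_sum _ _
  obtain ⟨k₀, -, -⟩ := exists_ne_zero_of_sum_ne_zero (hp_sum ▸ one_ne_zero)
  calc ∑ k, p k * a k - ∑ k, q k * a k ≤ (∑ k ∈ S, (p k - q k)) * (M - m) :=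
        sum_mul_sub_sum_mul_le (hp_sum.trans hq_sum.symm) hm hM
    _ ≤ (√ψ - 1) / (√ψ + 1) * (M - m) := by
        rw [sum_sub_distrib]
        exact mul_le_mul_of_nonneg_right hodds (by linarith [hm k₀, hM k₀])

lemma weightedMean_sub_le_of_cross_ratio_le {ι : Type*} [Fintype ι] [Nonempty ι]
    {w w' a : ι → ℝ} {ψ m M : ℝ} (hw : ∀ k, 0 < w k) (hw' : ∀ k, 0 < w' k)
    (hψ : ∀ k l, w k * w' l ≤ ψ * (w' k * w l)) (hm : ∀ k, m ≤ a k) (hM : ∀ k, a k ≤ M) :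
    (∑ k, w k * a k) / ∑ k, w k - (∑ k, w' k * a k) / ∑ k, w' k ≤
      (√ψ - 1) / (√ψ + 1) * (M - m) := by
  have hW : 0 < ∑ k, w k := sum_pos (fun k _ => hw k) univ_nonempty
  have hW' : 0 < ∑ k, w' k := sum_pos (fun k _ => hw' k) univ_nonempty
  have hmean : ∀ v : ι → ℝ, (∑ k, v k * a k) / ∑ k, v k = ∑ k, v k / (∑ l, v l) * a k :=
    fun v => by simp only [div_mul_eq_mul_div, sum_div]
  rw [hmean, hmean]
  refine sum_mul_sub_sum_mul_le_of_cross_ratio_le (fun k => (div_pos (hw' k) hW').le)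
    (by rw [← sum_div, div_self hW.ne']) (by rw [← sum_div, div_self hW'.ne'])
    (fun k l => ?_) hm hM
  rw [div_mul_div_comm, div_mul_div_comm, ← mul_div_assoc, mul_comm (∑ l, w' l)]
  exact div_le_div_of_nonneg_right (hψ k l) (mul_pos hW hW').le

lemma hasDerivAt_log_sum_mul_exp {ι : Type*} [Fintype ι] (c a : ι → ℝ) {s : ℝ}
    (hs : ∑ k, c k * exp (s * a k) ≠ 0) :
    HasDerivAt (fun s => log (∑ k, c k * exp (s * a k)))
      ((∑ k, c k * exp (s * a k) * a k) / ∑ k, c k * exp (s * a k)) s := by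
  refine HasDerivAt.log ?_ hs
  refine HasDerivAt.fun_sum fun k _ => ?_
  simpa [mul_assoc] using ((hasDerivAt_mul_const (a k)).exp).const_mul (c k)

lemma varSeminorm_le_of_forall_sub_le {R : ℕ} [Nonempty (Fin R)] {f : Fin R → ℝ} {C : ℝ}
    (h : ∀ i j, f i - f j ≤ C) : varSeminorm f ≤ C := by
  obtain ⟨j₀, hj₀⟩ := Finite.exists_min f
  rw [varSeminorm, sub_le_iff_le_add]
  exact ciSup_le fun i => by linarith [h i j₀, le_ciInf hj₀]

lemma varSeminorm_const_mul {R : ℕ} (f : Fin R → ℝ) {c : ℝ} (hc : 0 ≤ c) :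
    varSeminorm (fun i => c * f i) = c * varSeminorm f := by
  rw [varSeminorm, varSeminorm, mul_sub, Real.mul_iSup_of_nonneg hc, Real.mul_iInf_of_nonneg hc]

lemma mul_le_psiK_mul {R1 R2 : ℕ} {K : Matrix (Fin R1) (Fin R2) ℝ} (hK : ∀ i j, 0 < K i j)
    (i j : Fin R1) (k l : Fin R2) : K i k * K j l ≤ psiK K * (K j k * K i l) := by
  rw [← div_le_iff₀ (mul_pos (hK j k) (hK i l))]
  refine le_trans (le_ciSup (Finite.bddAbove_range fun l => K i k * K j l / (K j k * K i l)) l) ?_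
  refine le_trans (le_ciSup
    (Finite.bddAbove_range fun k => ⨆ l, K i k * K j l / (K j k * K i l)) k) ?_
  refine le_trans (le_ciSup
    (Finite.bddAbove_range fun j => ⨆ k, ⨆ l, K i k * K j l / (K j k * K i l)) j) ?_
  exact le_ciSup
    (Finite.bddAbove_range fun i => ⨆ j, ⨆ k, ⨆ l, K i k * K j l / (K j k * K i l)) i

lemma kappaK_nonneg {R1 R2 : ℕ} [Nonempty (Fin R1)] [Nonempty (Fin R2)]
    {K : Matrix (Fin R1) (Fin R2) ℝ} (hK : ∀ i j, 0 < K i j) : 0 ≤ kappaK K := by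
  obtain ⟨i⟩ := ‹Nonempty (Fin R1)›
  obtain ⟨k⟩ := ‹Nonempty (Fin R2)›
  have hψ : 1 ≤ psiK K := by
    have h := mul_le_psiK_mul hK i i k k
    rwa [le_mul_iff_one_le_left (mul_pos (hK i k) (hK i k))] at h
  have := one_le_sqrt.2 hψ
  exact div_nonneg (by linarith) (by linarith)

lemma varSeminorm_log_mulVec_sub_le {R1 R2 : ℕ} [Nonempty (Fin R1)] [Nonempty (Fin R2)]
    {K : Matrix (Fin R1) (Fin R2) ℝ} (hK : ∀ i j, 0 < K i j) {ψ : ℝ}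
    (hψ : ∀ i j k l, K i k * K j l ≤ ψ * (K j k * K i l))
    {x y : Fin R2 → ℝ} (hx : ∀ k, 0 < x k) (hy : ∀ k, 0 < y k) :
    varSeminorm (fun i => log (K.mulVec x i) - log (K.mulVec y i)) ≤
      (√ψ - 1) / (√ψ + 1) * varSeminorm (fun k => log (x k) - log (y k)) := by
  set a : Fin R2 → ℝ := fun k => log (x k) - log (y k)
  set w : Fin R1 → ℝ → Fin R2 → ℝ := fun i s k => K i k * y k * exp (s * a k)
  have hw : ∀ i s k, 0 < w i s k := fun i s k => mul_pos (mul_pos (hK i k) (hy k)) (exp_pos _)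
  have hw0 : ∀ i, ∑ k, w i 0 k = K.mulVec y i := fun i => by simp [w, Matrix.mulVec, dotProduct]
  have hw1 : ∀ i, ∑ k, w i 1 k = K.mulVec x i := fun i => by
    refine sum_congr rfl fun k _ => ?_
    show K i k * y k * exp (1 * a k) = K i k * x k
    rw [one_mul, exp_sub, exp_log (hx k), exp_log (hy k), mul_assoc, mul_div_cancel₀ _ (hy k).ne']
  have hderiv : ∀ i s, HasDerivAt (fun s => log (∑ k, w i s k))
      ((∑ k, w i s k * a k) / ∑ k, w i s k) s := fun i s =>
    hasDerivAt_log_sum_mul_exp (fun k => K i k * y k) a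
      (sum_pos (fun k _ => hw i s k) univ_nonempty).ne'
  refine varSeminorm_le_of_forall_sub_le fun i j => ?_
  obtain ⟨s, -, hs⟩ := exists_hasDerivAt_eq_slope
    (fun s => log (∑ k, w i s k) - log (∑ k, w j s k)) _ zero_lt_one
    (fun s _ => ((hderiv i s).sub (hderiv j s)).continuousAt.continuousWithinAt)
    fun s _ => (hderiv i s).sub (hderiv j s)
  calc log (K.mulVec x i) - log (K.mulVec y i) - (log (K.mulVec x j) - log (K.mulVec y j))
      = (∑ k, w i s k * a k) / ∑ k, w i s k - (∑ k, w j s k * a k) / ∑ k, w j s k := by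
        rw [hs, ← hw0, ← hw1, ← hw0, ← hw1]; ring
    _ ≤ (√ψ - 1) / (√ψ + 1) * varSeminorm a := by
        refine weightedMean_sub_le_of_cross_ratio_le (hw i s) (hw j s) (fun k l => ?_)
          (fun k => ciInf_le (Finite.bddBelow_range a) k)
          (fun k => le_ciSup (Finite.bddAbove_range a) k)
        have hkl : 0 ≤ y k * exp (s * a k) * (y l * exp (s * a l)) :=
          (mul_pos (mul_pos (hy k) (exp_pos _)) (mul_pos (hy l) (exp_pos _))).le
        have := mul_le_mul_of_nonneg_right (hψ i j k l) hkl
        simp only [w]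
        linarith

lemma log_div_sub_log_div {c x y : ℝ} (hc : c ≠ 0) (hx : x ≠ 0) (hy : y ≠ 0) :
    log (c / x) - log (c / y) = log y - log x := by
  rw [log_div hc hx, log_div hc hy]; ring

lemma mulVec_pos_s15 {m n : Type*} [Fintype n] [Nonempty n] {A : Matrix m n ℝ}
    (hA : ∀ i j, 0 < A i j) {w : n → ℝ} (hw : ∀ k, 0 < w k) (i : m) : 0 < A.mulVec w i :=
  sum_pos (fun k _ => mul_pos (hA i k) (hw k)) univ_nonempty

lemma varSeminorm_log_div_mulVec_sub_le {R1 R2 : ℕ} [Nonempty (Fin R1)] [Nonempty (Fin R2)]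
    {K : Matrix (Fin R1) (Fin R2) ℝ} (hK : ∀ i j, 0 < K i j) {ψ : ℝ}
    (hψ : ∀ i j k l, K i k * K j l ≤ ψ * (K j k * K i l)) {c : Fin R1 → ℝ} (hc : ∀ i, 0 < c i)
    {x y : Fin R2 → ℝ} (hx : ∀ k, 0 < x k) (hy : ∀ k, 0 < y k) :
    varSeminorm (fun i => log (c i / K.mulVec y i) - log (c i / K.mulVec x i)) ≤
      (√ψ - 1) / (√ψ + 1) * varSeminorm (fun k => log (x k) - log (y k)) := by
  simp only [fun i => log_div_sub_log_div (hc i).ne' (mulVec_pos_s15 hK hy i).ne'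
    (mulVec_pos_s15 hK hx i).ne']
  exact varSeminorm_log_mulVec_sub_le hK hψ hx hy

theorem sinkhorn_gradient_convergence_rate_general {R1 R2 : ℕ}
    [Nonempty (Fin R1)] [Nonempty (Fin R2)]
    (K : Matrix (Fin R1) (Fin R2) ℝ) (hK : ∀ i j, 0 < K i j)
    (μ : Fin R1 → ℝ) (ν : Fin R2 → ℝ)
    (hμpos : ∀ m, 0 < μ m) (hνpos : ∀ n, 0 < ν n)
    (u : ℕ → Fin R1 → ℝ) (v : ℕ → Fin R2 → ℝ)
    (hupos : ∀ t m, 0 < u t m) (hvpos : ∀ t n, 0 < v t n)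
    (hiter_u : ∀ t m, u (t + 1) m = μ m / K.mulVec (v t) m)
    (hiter_v : ∀ t n, v (t + 1) n = ν n / K.transpose.mulVec (u (t + 1)) n)
    (ustar : Fin R1 → ℝ) (vstar : Fin R2 → ℝ)
    (hustar_pos : ∀ m, 0 < ustar m) (hvstar_pos : ∀ n, 0 < vstar n)
    (hustar : ∀ m, ustar m = μ m / K.mulVec vstar m)
    (hvstar : ∀ n, vstar n = ν n / K.transpose.mulVec ustar n)
    (ε : ℝ) (hε : 0 < ε) :
    ∀ t : ℕ,
      0 < varSeminorm (fun n => ε * Real.log (v t n) - ε * Real.log (vstar n)) →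
      varSeminorm (fun n => ε * Real.log (v (t + 1) n) - ε * Real.log (vstar n)) /
          varSeminorm (fun n => ε * Real.log (v t n) - ε * Real.log (vstar n)) ≤
        kappaK K ^ 2 := by
  intro t hpos
  have hψT : ∀ i j k l, K.transpose i k * K.transpose j l ≤
      psiK K * (K.transpose j k * K.transpose i l) := fun i j k l => by
    simpa only [Matrix.transpose_apply, mul_comm] using mul_le_psiK_mul hK k l i j
  have hcontract : varSeminorm (fun n => log (v (t + 1) n) - log (vstar n)) ≤
      kappaK K ^ 2 * varSeminorm (fun n => log (v t n) - log (vstar n)) :=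
    calc varSeminorm (fun n => log (v (t + 1) n) - log (vstar n))
        ≤ kappaK K * varSeminorm (fun m => log (ustar m) - log (u (t + 1) m)) := by
          simp only [hiter_v, hvstar]
          exact varSeminorm_log_div_mulVec_sub_le (fun i j => hK j i) hψT hνpos hustar_pos
            (hupos (t + 1))
      _ ≤ kappaK K * (kappaK K * varSeminorm (fun n => log (v t n) - log (vstar n))) := by
          refine mul_le_mul_of_nonneg_left ?_ (kappaK_nonneg hK)
          simp only [hiter_u, hustar]
          exact varSeminorm_log_div_mulVec_sub_le hK (mul_le_psiK_mul hK) hμpos (hvpos t)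
            hvstar_pos
      _ = kappaK K ^ 2 * varSeminorm (fun n => log (v t n) - log (vstar n)) := by ring
  simp only [← mul_sub] at hpos ⊢
  rw [varSeminorm_const_mul _ hε.le] at hpos ⊢
  rw [varSeminorm_const_mul _ hε.le, mul_div_mul_left _ _ hε.ne',
    div_le_iff₀ (pos_of_mul_pos_right hpos hε.le)]
  exact hcontract

/-- Convergence rate of the Sinkhorn gradient (Proposition 4.3): along the Sinkhorn
iterations with positive kernel `K` and positive probability marginals `μ, ν`,
converging to the fixed point `(u*, v*)`, the approximate gradient
`g^{(t)} = ε log v^{(t)}` satisfies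
`‖g^{(t+1)} - g‖_var / ‖g^{(t)} - g‖_var ≤ κ(K)²` whenever `‖g^{(t)} - g‖_var > 0`,
where `g = ε log v*`. -/
theorem sinkhorn_gradient_convergence_rate {R1 R2 : ℕ}
    [Nonempty (Fin R1)] [Nonempty (Fin R2)]
    (K : Matrix (Fin R1) (Fin R2) ℝ) (hK : ∀ i j, 0 < K i j)
    (μ : Fin R1 → ℝ) (ν : Fin R2 → ℝ)
    (hμpos : ∀ m, 0 < μ m) (hνpos : ∀ n, 0 < ν n)
    (hμsum : ∑ m, μ m = 1) (hνsum : ∑ n, ν n = 1)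
    (u : ℕ → Fin R1 → ℝ) (v : ℕ → Fin R2 → ℝ)
    (hupos : ∀ t m, 0 < u t m) (hvpos : ∀ t n, 0 < v t n)
    (hiter_u : ∀ t m, u (t + 1) m = μ m / K.mulVec (v t) m)
    (hiter_v : ∀ t n, v (t + 1) n = ν n / K.transpose.mulVec (u (t + 1)) n)
    (ustar : Fin R1 → ℝ) (vstar : Fin R2 → ℝ)
    (hustar_pos : ∀ m, 0 < ustar m) (hvstar_pos : ∀ n, 0 < vstar n)
    (hustar : ∀ m, ustar m = μ m / K.mulVec vstar m)
    (hvstar : ∀ n, vstar n = ν n / K.transpose.mulVec ustar n)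
    (hconv_u : Filter.Tendsto u Filter.atTop (nhds ustar))
    (hconv_v : Filter.Tendsto v Filter.atTop (nhds vstar))
    (ε : ℝ) (hε : 0 < ε) :
    ∀ t : ℕ,
      0 < varSeminorm (fun n => ε * Real.log (v t n) - ε * Real.log (vstar n)) →
      varSeminorm (fun n => ε * Real.log (v (t + 1) n) - ε * Real.log (vstar n)) /
          varSeminorm (fun n => ε * Real.log (v t n) - ε * Real.log (vstar n)) ≤
        kappaK K ^ 2 :=
  sinkhorn_gradient_convergence_rate_general K hK μ ν hμpos hνpos u v hupos hvpos hiter_u hiter_v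
    ustar vstar hustar_pos hvstar_pos hustar hvstar ε hε
end
end
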